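/- Generalized Gronwall with singular kernel: Let γ ∈ (0,1], a, K ≥ 0, μ > 0, ε > 0, and let z : [0,T] → [0,∞) be continuous and satisfy z(t) ≤ a + K ∫₀ᵗ ε^{−γ}(t−s)^{γ−1} e^{−ε^{−1}μ(t−s)} z(s) ds for all t ∈ [0,T]. If K Γ(γ) μ^{−γ} < 1, then z(t) ≤ a / (1 − K Γ(γ) μ^{−γ}) for all t ∈ [0,T]. -/

import Mathlib

/-!
The kernel `ε^{-γ} u^{γ-1} e^{-μu/ε}` is `ε^{-γ}` times an unnormalised Gamma density of rate
`μ/ε`, so its integral over `(0, ∞)` is `Γ(γ) μ^{-γ}`, whatever `ε`. At a maximum point `t₀` of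
`z` on `[0, T]` the hypothesis therefore gives `z t₀ ≤ a + K Γ(γ) μ^{-γ} z t₀`, and since
`K Γ(γ) μ^{-γ} < 1` this rearranges to the claimed bound on `z t₀ = max z`.
-/

open Set MeasureTheory Real

section ConvolutionKernel

variable {k : ℝ → ℝ}

lemma intervalIntegrable_comp_sub_left_of_integrableOn_Ioi (hk : IntegrableOn k (Ioi 0))
    {t : ℝ} (ht : 0 ≤ t) : IntervalIntegrable (fun s => k (t - s)) volume 0 t := by
  have : IntervalIntegrable k volume 0 t :=
    (intervalIntegrable_iff_integrableOn_Ioc_of_le ht).mpr (hk.mono_set Ioc_subset_Ioi_self)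
  simpa using (this.comp_sub_left t).symm

lemma intervalIntegral_comp_sub_left_le_integral_Ioi (hk : IntegrableOn k (Ioi 0))
    (hk0 : ∀ u ∈ Ici (0 : ℝ), 0 ≤ k u) {t : ℝ} (ht : 0 ≤ t) :
    ∫ s in (0 : ℝ)..t, k (t - s) ≤ ∫ u in Ioi 0, k u := by
  rw [intervalIntegral.integral_comp_sub_left, sub_self, sub_zero,
    intervalIntegral.integral_of_le ht]
  exact setIntegral_mono_set hk
    ((ae_restrict_iff' measurableSet_Ioi).mpr (.of_forall fun u hu => hk0 u (mem_Ici.mpr (le_of_lt hu))))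
    (.of_forall fun _ hu => Ioc_subset_Ioi_self hu)

lemma intervalIntegral_comp_sub_left_mul_le (hk : IntegrableOn k (Ioi 0))
    (hk0 : ∀ u ∈ Ici (0 : ℝ), 0 ≤ k u) {z : ℝ → ℝ} {M t : ℝ} (ht : 0 ≤ t)
    (hz : ContinuousOn z (Icc 0 t)) (hzM : ∀ s ∈ Icc 0 t, z s ≤ M) (hM : 0 ≤ M) :
    ∫ s in (0 : ℝ)..t, k (t - s) * z s ≤ M * ∫ u in Ioi 0, k u := by
  have hkt := intervalIntegrable_comp_sub_left_of_integrableOn_Ioi hk ht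
  calc ∫ s in (0 : ℝ)..t, k (t - s) * z s
      ≤ ∫ s in (0 : ℝ)..t, k (t - s) * M := by
        refine intervalIntegral.integral_mono_on ht
          (hkt.mul_continuousOn (by rwa [uIcc_of_le ht])) (hkt.mul_const M) fun s hs => ?_
        exact mul_le_mul_of_nonneg_left (hzM s hs) (hk0 _ (sub_nonneg.mpr hs.2))
    _ = M * ∫ s in (0 : ℝ)..t, k (t - s) := by
        rw [intervalIntegral.integral_mul_const, mul_comm]
    _ ≤ M * ∫ u in Ioi 0, k u :=
        mul_le_mul_of_nonneg_left (intervalIntegral_comp_sub_left_le_integral_Ioi hk hk0 ht) hM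

theorem le_div_of_le_add_mul_integral_comp_sub (hk : IntegrableOn k (Ioi 0))
    (hk0 : ∀ u ∈ Ici (0 : ℝ), 0 ≤ k u) {a K T : ℝ} {z : ℝ → ℝ} (hK : 0 ≤ K)
    (hz : ContinuousOn z (Icc 0 T)) (hznn : ∀ t ∈ Icc 0 T, 0 ≤ z t)
    (hineq : ∀ t ∈ Icc 0 T, z t ≤ a + K * ∫ s in (0 : ℝ)..t, k (t - s) * z s)
    (hcontr : K * ∫ u in Ioi 0, k u < 1) :
    ∀ t ∈ Icc 0 T, z t ≤ a / (1 - K * ∫ u in Ioi 0, k u) := by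
  intro t ht
  obtain ⟨t₀, ht₀, hmax⟩ := isCompact_Icc.exists_isMaxOn ⟨t, ht⟩ hz
  have hbound := intervalIntegral_comp_sub_left_mul_le hk hk0 ht₀.1
    (hz.mono (Icc_subset_Icc le_rfl ht₀.2)) (fun s hs => hmax (Icc_subset_Icc le_rfl ht₀.2 hs))
    (hznn t₀ ht₀)
  have hfix : z t₀ ≤ a + (K * ∫ u in Ioi 0, k u) * z t₀ := by
    nlinarith [hineq t₀ ht₀, mul_le_mul_of_nonneg_left hbound hK]
  calc z t ≤ z t₀ := hmax ht
    _ ≤ a / (1 - K * ∫ u in Ioi 0, k u) := by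
        rw [le_div_iff₀ (sub_pos.mpr hcontr)]
        linarith

end ConvolutionKernel

noncomputable def singularExpKernel (γ μ ε u : ℝ) : ℝ :=
  ε ^ (-γ) * u ^ (γ - 1) * exp (-ε⁻¹ * μ * u)

section SingularExpKernel

variable {γ μ ε : ℝ}

lemma singularExpKernel_nonneg (hε : 0 ≤ ε) {u : ℝ} (hu : 0 ≤ u) :
    0 ≤ singularExpKernel γ μ ε u := by
  unfold singularExpKernel
  have := rpow_nonneg hε (-γ)
  have := rpow_nonneg hu (γ - 1)
  positivity

lemma integral_singularExpKernel_Ioi (hγ : 0 < γ) (hμ : 0 < μ) (hε : 0 < ε) :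
    ∫ u in Ioi 0, singularExpKernel γ μ ε u = Gamma γ * μ ^ (-γ) := by
  have hrate : 0 < ε⁻¹ * μ := by positivity
  calc ∫ u in Ioi 0, singularExpKernel γ μ ε u
      = ε ^ (-γ) * ∫ u in Ioi 0, u ^ (γ - 1) * exp (-(ε⁻¹ * μ * u)) := by
        rw [← integral_const_mul]
        refine setIntegral_congr_fun measurableSet_Ioi fun u _ => ?_
        simp only [singularExpKernel, neg_mul, mul_assoc]
    _ = ε ^ (-γ) * ((1 / (ε⁻¹ * μ)) ^ γ * Gamma γ) := by
        rw [integral_rpow_mul_exp_neg_mul_Ioi hγ hrate]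
    _ = Gamma γ * μ ^ (-γ) := by
        rw [one_div, mul_inv, inv_inv, mul_rpow hε.le (inv_nonneg.mpr hμ.le),
          inv_rpow hμ.le, ← rpow_neg hμ.le, rpow_neg hε.le]
        field_simp

lemma integrableOn_singularExpKernel_Ioi (hγ : 0 < γ) (hμ : 0 < μ) (hε : 0 < ε) :
    IntegrableOn (singularExpKernel γ μ ε) (Ioi 0) :=
  .of_integral_ne_zero <| by
    rw [integral_singularExpKernel_Ioi hγ hμ hε]
    exact (mul_pos (Gamma_pos_of_pos hγ) (rpow_pos_of_pos hμ _)).ne'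

end SingularExpKernel

theorem stmt14_general (γ a K μ ε T : ℝ) (hγ : γ ∈ Set.Ioc (0:ℝ) 1)
    (hK : 0 ≤ K) (hμ : 0 < μ) (hε : 0 < ε)
    (z : ℝ → ℝ) (hz : ContinuousOn z (Set.Icc 0 T))
    (hznn : ∀ t ∈ Set.Icc (0:ℝ) T, 0 ≤ z t)
    (hineq : ∀ t ∈ Set.Icc (0:ℝ) T,
      z t ≤ a + K * ∫ s in (0:ℝ)..t,
        ε ^ (-γ) * (t - s) ^ (γ - 1) * Real.exp (-ε⁻¹ * μ * (t - s)) * z s)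
    (hcontr : K * Real.Gamma γ * μ ^ (-γ) < 1) :
    ∀ t ∈ Set.Icc (0:ℝ) T, z t ≤ a / (1 - K * Real.Gamma γ * μ ^ (-γ)) := by
  have hmass := integral_singularExpKernel_Ioi hγ.1 hμ hε
  rw [mul_assoc, ← hmass] at hcontr ⊢
  exact le_div_of_le_add_mul_integral_comp_sub (integrableOn_singularExpKernel_Ioi hγ.1 hμ hε)
    (fun _ hu => singularExpKernel_nonneg hε.le hu) hK hz hznn hineq hcontr

/-- Generalized Gronwall lemma with singular kernel: if `z ≥ 0` is continuous on
`[0,T]` and `z(t) ≤ a + K ∫₀ᵗ ε^{-γ}(t-s)^{γ-1} e^{-ε⁻¹μ(t-s)} z(s) ds`, and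
`K Γ(γ) μ^{-γ} < 1`, then `z(t) ≤ a / (1 - K Γ(γ) μ^{-γ})` on `[0,T]`. -/
theorem stmt14 (γ a K μ ε T : ℝ) (hγ : γ ∈ Set.Ioc (0:ℝ) 1)
    (ha : 0 ≤ a) (hK : 0 ≤ K) (hμ : 0 < μ) (hε : 0 < ε) (hT : 0 ≤ T)
    (z : ℝ → ℝ) (hz : ContinuousOn z (Set.Icc 0 T))
    (hznn : ∀ t ∈ Set.Icc (0:ℝ) T, 0 ≤ z t)
    (hineq : ∀ t ∈ Set.Icc (0:ℝ) T,
      z t ≤ a + K * ∫ s in (0:ℝ)..t,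
        ε ^ (-γ) * (t - s) ^ (γ - 1) * Real.exp (-ε⁻¹ * μ * (t - s)) * z s)
    (hcontr : K * Real.Gamma γ * μ ^ (-γ) < 1) :
    ∀ t ∈ Set.Icc (0:ℝ) T, z t ≤ a / (1 - K * Real.Gamma γ * μ ^ (-γ)) :=
  stmt14_general γ a K μ ε T hγ hK hμ hε z hz hznn hineq hcontr
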